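/- Let M be a compact smooth m-dimensional manifold embedded in ℝ^(m+k) with k > m+1. Then there exists a linear projection π from ℝ^(m+k) onto a (2m+1)-dimensional subspace such that the restriction of π to M is a smooth embedding of M into ℝ^(2m+1). -/

import Mathlib

/-!
Let `C` be the union of the cone over the secants `ι p - ι q` and of the set of tangent vectors
`dι_p w`. These are the ranges of `C¹` maps on the manifolds `M × M × ℝ` and `TM`, of dimensions
`2m + 1` and `2m`, so `C` has Hausdorff dimension at most `2m + 1`. A linear map whose kernel
meets `C` only in `0` restricts to an injective immersion on `M`. Such a kernel `K` is grown one
dimension at a time: while `dim Kᗮ > 2m + 1`, the orthogonal projection of `C` to `Kᗮ` is too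
small to fill `Kᗮ`, and adjoining to `K` a direction of `Kᗮ` missed by it keeps `K ∩ C = 0`,
because `C` is a cone. Projecting onto `Kᗮ` once `dim Kᗮ = 2m + 1` gives the result;
compactness of `M` upgrades the injective immersion to an embedding.
-/

open Function Manifold Set Module

theorem ContDiffOn.dimH_image_le_of_isOpen {E F : Type*} [NormedAddCommGroup E]
    [NormedSpace ℝ E] [FiniteDimensional ℝ E] [NormedAddCommGroup F] [NormedSpace ℝ F]
    {f : E → F} {s : Set E} (hf : ContDiffOn ℝ 1 f s) (hs : IsOpen s) :
    dimH (f '' s) ≤ finrank ℝ E :=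
  calc dimH (f '' s) ≤ dimH s :=
        dimH_image_le_of_locally_lipschitzOn fun x hx => by
          obtain ⟨C, t, ht, hC⟩ :=
            ((hf x hx).contDiffAt (hs.mem_nhds hx)).exists_lipschitzOnWith
          exact ⟨C, t, nhdsWithin_le_nhds ht, hC⟩
    _ ≤ finrank ℝ E := (dimH_mono (subset_univ s)).trans (Real.dimH_univ_eq_finrank E).le

section Manifold

variable {E H N F : Type*} [NormedAddCommGroup E] [NormedSpace ℝ E] [TopologicalSpace H]
  {I : ModelWithCorners ℝ E H} [TopologicalSpace N] [ChartedSpace H N]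
  [NormedAddCommGroup F] [NormedSpace ℝ F]

theorem ContMDiff.dimH_range_le [FiniteDimensional ℝ E] [I.Boundaryless] [IsManifold I 1 N]
    [SecondCountableTopology N] {g : N → F} (hg : ContMDiff I 𝓘(ℝ, F) 1 g) :
    dimH (range g) ≤ finrank ℝ E := by
  obtain ⟨s, hs, hcover⟩ :=
    TopologicalSpace.countable_cover_nhds fun x : N => chart_source_mem_nhds H x
  have hrange : range g = ⋃ x ∈ s, (g ∘ (extChartAt I x).symm) '' (extChartAt I x).target := by
    simp_rw [image_comp, (extChartAt I _).symm_image_target_eq_source, extChartAt_source,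
      ← image_iUnion₂, hcover, image_univ]
  rw [hrange, dimH_bUnion hs]
  refine iSup₂_le fun x _ => ContDiffOn.dimH_image_le_of_isOpen ?_ (isOpen_extChartAt_target x)
  exact contMDiffOn_iff_contDiffOn.1 (hg.comp_contMDiffOn (contMDiffOn_extChartAt_symm x))

theorem TangentBundle.secondCountableTopology (I : ModelWithCorners ℝ E H) [IsManifold I 1 N]
    [SecondCountableTopology H] [SecondCountableTopology E] [SecondCountableTopology N] :
    SecondCountableTopology (TangentBundle I N) := by
  have : SecondCountableTopology (ModelProd H E) :=
    inferInstanceAs (SecondCountableTopology (H × E))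
  obtain ⟨s, hs, hcover⟩ :=
    TopologicalSpace.countable_cover_nhds fun x : N => chart_source_mem_nhds H x
  refine ChartedSpace.secondCountable_of_countable_cover (ModelProd H E)
    (s := (fun x => (⟨x, 0⟩ : TangentBundle I N)) '' s) ?_ (hs.image _)
  refine eq_univ_of_forall fun v => ?_
  obtain ⟨x, hx, hvx⟩ := mem_iUnion₂.1 (hcover ▸ mem_univ v.1)
  exact mem_iUnion₂.2 ⟨_, mem_image_of_mem _ hx, (TangentBundle.mem_chart_source_iff _ _).2 hvx⟩

end Manifold

section Avoidance

variable {V : Type*} [NormedAddCommGroup V] [InnerProductSpace ℝ V] [FiniteDimensional ℝ V]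
  {C : Set V}

theorem Submodule.exists_finrank_succ_inter_subset_zero (hC : ∀ (t : ℝ), ∀ x ∈ C, t • x ∈ C)
    {K : Submodule ℝ V} (hK : C ∩ K ⊆ {0}) (hdim : dimH C < finrank ℝ Kᗮ) :
    ∃ K' : Submodule ℝ V, finrank ℝ K' = finrank ℝ K + 1 ∧ C ∩ K' ⊆ {0} := by
  set P := Kᗮ.orthogonalProjectionOnto
  have hsmall : dimH (P '' C ∪ {0}) < finrank ℝ Kᗮ := by
    rw [dimH_union, dimH_singleton, max_eq_left zero_le]
    exact (P.lipschitz.dimH_image_le C).trans_lt hdim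
  obtain ⟨v, hv⟩ := (dense_compl_of_dimH_lt_finrank hsmall).nonempty
  simp only [mem_compl_iff, mem_union, mem_singleton_iff, not_or] at hv
  obtain ⟨hvC, hv0⟩ := hv
  have hv0' : (v : V) ≠ 0 := by exact_mod_cast hv0
  refine ⟨K ⊔ ℝ ∙ (v : V), ?_, ?_⟩
  · have hdisj : K ⊓ ℝ ∙ (v : V) = ⊥ :=
      eq_bot_iff.2 <| (inf_le_inf_left K ((span_singleton_le_iff_mem _ _).2 v.2)).trans
        K.inf_orthogonal_eq_bot.le
    have := finrank_sup_add_finrank_inf_eq K (ℝ ∙ (v : V))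
    rw [hdisj, finrank_bot, finrank_span_singleton hv0'] at this
    omega
  · rintro x ⟨hxC, hx⟩
    obtain ⟨y, hy, z, hz, rfl⟩ := mem_sup.1 hx
    obtain ⟨t, rfl⟩ := mem_span_singleton.1 hz
    have hPx : P (y + t • (v : V)) = t • v := by
      rw [map_add, map_smul, orthogonalProjectionOnto_mem_subspace_eq_self,
        orthogonalProjectionOnto_eq_zero_iff.2 (le_orthogonal_orthogonal K hy), zero_add]
    obtain rfl : t = 0 := by
      by_contra ht
      refine hvC ⟨t⁻¹ • (y + t • (v : V)), hC _ _ hxC, ?_⟩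
      rw [map_smul, hPx, inv_smul_smul₀ ht]
    rw [zero_smul, add_zero] at hxC ⊢
    exact hK ⟨hxC, hy⟩

theorem Submodule.exists_finrank_eq_inter_subset_zero (hC : ∀ (t : ℝ), ∀ x ∈ C, t • x ∈ C)
    {d : ℕ} (hd : dimH C ≤ d) {j : ℕ} (hj : j + d ≤ finrank ℝ V) :
    ∃ K : Submodule ℝ V, finrank ℝ K = j ∧ C ∩ K ⊆ {0} := by
  induction j with
  | zero => exact ⟨⊥, finrank_bot ℝ V, fun x hx => hx.2⟩
  | succ j ih =>
    obtain ⟨K, hKj, hK⟩ := ih (by omega)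
    have hdim : dimH C < finrank ℝ Kᗮ := by
      refine hd.trans_lt ?_
      have := K.finrank_add_finrank_orthogonal
      exact_mod_cast (show d < finrank ℝ Kᗮ by omega)
    obtain ⟨K', hK'j, hK'⟩ := exists_finrank_succ_inter_subset_zero hC hK hdim
    exact ⟨K', hK'j.trans (by rw [hKj]), hK'⟩

end Avoidance

section Secants

variable {M F G : Type*} [NormedAddCommGroup F] [NormedSpace ℝ F]
  [NormedAddCommGroup G] [NormedSpace ℝ G]

def secantCone (f : M → F) : Set F :=
  range fun x : M × M × ℝ => x.2.2 • (f x.1 - f x.2.1)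

theorem smul_mem_secantCone {f : M → F} (t : ℝ) {x : F} (hx : x ∈ secantCone f) :
    t • x ∈ secantCone f := by
  obtain ⟨⟨p, q, s⟩, rfl⟩ := hx
  exact ⟨⟨p, q, t * s⟩, (smul_smul t s _).symm⟩

theorem Function.Injective.comp_of_secantCone_inter_ker {f : M → F} (hf : Injective f)
    {L : F →ₗ[ℝ] G} (hL : secantCone f ∩ L.ker ⊆ {0}) : Injective (L ∘ f) := by
  intro p q hpq
  have hsec : f p - f q ∈ secantCone f := ⟨(p, q, 1), one_smul ℝ _⟩
  have hker : f p - f q ∈ L.ker := by simpa [LinearMap.mem_ker, sub_eq_zero] using hpq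
  exact hf (sub_eq_zero.1 (hL ⟨hsec, hker⟩))

variable {E H : Type*} [NormedAddCommGroup E] [NormedSpace ℝ E] [TopologicalSpace H]
  (I : ModelWithCorners ℝ E H) [TopologicalSpace M] [ChartedSpace H M]

def tangentVectors (f : M → F) : Set F :=
  range fun v : TangentBundle I M => mfderiv I 𝓘(ℝ, F) f v.1 v.2

variable {I}

theorem smul_mem_tangentVectors {f : M → F} (t : ℝ) {x : F}
    (hx : x ∈ tangentVectors I f) : t • x ∈ tangentVectors I f := by
  obtain ⟨⟨p, w⟩, rfl⟩ := hx
  exact ⟨⟨p, t • w⟩, map_smul _ t w⟩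

theorem injective_mfderiv_comp_of_tangentVectors_inter_ker {f : M → F} {p : M}
    (hf : MDifferentiableAt I 𝓘(ℝ, F) f p) (hfp : Injective (mfderiv I 𝓘(ℝ, F) f p))
    {L : F →L[ℝ] G} (hL : tangentVectors I f ∩ L.ker ⊆ {0}) :
    Injective (mfderiv I 𝓘(ℝ, G) (L ∘ f) p) := by
  rw [mfderiv_comp p L.mdifferentiableAt hf, L.mfderiv_eq, injective_iff_map_eq_zero]
  intro w hw
  have hzero : mfderiv I 𝓘(ℝ, F) f p w = 0 := hL ⟨⟨⟨p, w⟩, rfl⟩, hw⟩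
  exact hfp (hzero.trans (map_zero _).symm)

variable [FiniteDimensional ℝ E] [I.Boundaryless] [SecondCountableTopology M]

theorem dimH_secantCone_le [IsManifold I 1 M] {f : M → F} (hf : ContMDiff I 𝓘(ℝ, F) 1 f) :
    dimH (secantCone f) ≤ (2 * finrank ℝ E + 1 : ℕ) := by
  have hg : ContMDiff (I.prod (I.prod 𝓘(ℝ, ℝ))) 𝓘(ℝ, F) 1
      fun x : M × M × ℝ => x.2.2 • (f x.1 - f x.2.1) :=
    contMDiff_snd.snd.smul ((hf.comp contMDiff_fst).sub (hf.comp contMDiff_snd.fst))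
  refine hg.dimH_range_le.trans_eq ?_
  simp only [finrank_prod, finrank_self]
  norm_cast
  ring

theorem dimH_tangentVectors_le [IsManifold I 2 M] {f : M → F} (hf : ContMDiff I 𝓘(ℝ, F) 2 f) :
    dimH (tangentVectors I f) ≤ (2 * finrank ℝ E : ℕ) := by
  have : SecondCountableTopology H := I.secondCountableTopology
  have := TangentBundle.secondCountableTopology (N := M) I
  have hg : ContMDiff I.tangent 𝓘(ℝ, F) 1
      fun v : TangentBundle I M => (tangentMap I 𝓘(ℝ, F) f v).2 :=
    (contMDiff_snd_tangentBundle_modelSpace F 𝓘(ℝ, F)).comp (hf.contMDiff_tangentMap le_rfl)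
  refine hg.dimH_range_le.trans_eq ?_
  simp only [finrank_prod]
  norm_cast
  ring

end Secants

theorem whitney_projection_embedding_general (m k : ℕ) (hk : k > m + 1)
    (M : Type*) [TopologicalSpace M]
    [ChartedSpace (EuclideanSpace ℝ (Fin m)) M]
    [IsManifold (𝓡 m) (⊤ : ℕ∞) M] [CompactSpace M]
    (ι : M → EuclideanSpace ℝ (Fin (m + k)))
    (hι_smooth : ContMDiff (𝓡 m) 𝓘(ℝ, EuclideanSpace ℝ (Fin (m + k))) (⊤ : ℕ∞) ι)
    (hι_inj : Injective ι)
    (hι_imm : ∀ p : M,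
      Injective (mfderiv (𝓡 m) 𝓘(ℝ, EuclideanSpace ℝ (Fin (m + k))) ι p)) :
    ∃ π : EuclideanSpace ℝ (Fin (m + k)) →ₗ[ℝ] EuclideanSpace ℝ (Fin (m + k)),
      π ∘ₗ π = π ∧
      Module.finrank ℝ (LinearMap.range π) = 2 * m + 1 ∧
      ContMDiff (𝓡 m) 𝓘(ℝ, EuclideanSpace ℝ (Fin (m + k))) (⊤ : ℕ∞) (π ∘ ι) ∧
      Injective (π ∘ ι) ∧
      (∀ p : M,
        Injective (mfderiv (𝓡 m) 𝓘(ℝ, EuclideanSpace ℝ (Fin (m + k))) (π ∘ ι) p)) ∧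
      Topology.IsEmbedding (π ∘ ι) := by
  have := ChartedSpace.secondCountable_of_sigmaCompact (EuclideanSpace ℝ (Fin m)) M
  set C := secantCone ι ∪ tangentVectors (𝓡 m) ι
  have hC : ∀ t : ℝ, ∀ x ∈ C, t • x ∈ C := by
    rintro t x (hx | hx)
    exacts [Or.inl (smul_mem_secantCone t hx), Or.inr (smul_mem_tangentVectors t hx)]
  have hdim : dimH C ≤ (2 * m + 1 : ℕ) := by
    have hsec := dimH_secantCone_le (hι_smooth.of_le (by norm_cast))
    have htan := dimH_tangentVectors_le (hι_smooth.of_le (by norm_cast))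
    simp only [finrank_euclideanSpace_fin] at hsec htan
    rw [dimH_union]
    exact max_le hsec (htan.trans (by norm_cast; omega))
  obtain ⟨K, hKrank, hK⟩ := Submodule.exists_finrank_eq_inter_subset_zero hC hdim
    (j := m + k - (2 * m + 1)) (by rw [finrank_euclideanSpace_fin]; omega)
  set π := Kᗮ.starProjection
  have hker : C ∩ π.ker ⊆ {0} := by
    rwa [Submodule.ker_starProjection, K.orthogonal_orthogonal]
  have hsmooth : ContMDiff (𝓡 m) 𝓘(ℝ, EuclideanSpace ℝ (Fin (m + k))) (⊤ : ℕ∞) (π ∘ ι) :=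
    π.contMDiff.comp hι_smooth
  have hinj : Injective (π ∘ ι) :=
    hι_inj.comp_of_secantCone_inter_ker (L := π.toLinearMap)
      ((inter_subset_inter_left _ subset_union_left).trans hker)
  refine ⟨π, ?_, ?_, hsmooth, hinj, fun p => ?_,
    (hsmooth.continuous.isClosedEmbedding hinj).isEmbedding⟩
  · exact congrArg ContinuousLinearMap.toLinearMap Kᗮ.isIdempotentElem_starProjection.eq
  · have := K.finrank_add_finrank_orthogonal
    rw [finrank_euclideanSpace_fin] at this
    rw [Submodule.range_starProjection]
    omega
  · exact injective_mfderiv_comp_of_tangentVectors_inter_ker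
      ((hι_smooth p).mdifferentiableAt (by simp)) (hι_imm p)
      ((inter_subset_inter_left _ subset_union_right).trans hker)

/-- **Projection form of Whitney's weak embedding theorem.**  Let `M` be a compact smooth
`m`-dimensional manifold smoothly embedded (via `ι`) in `ℝ^(m+k)` with `k > m + 1`.  Then
there is a linear projection `π` of `ℝ^(m+k)` onto a `(2m+1)`-dimensional subspace such that
`π` restricted to `M` (i.e. `π ∘ ι`) is again a smooth embedding: smooth, injective, an
immersion, and a topological embedding. -/
theorem whitney_projection_embedding (m k : ℕ) (hk : k > m + 1)
    (M : Type*) [TopologicalSpace M]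
    [ChartedSpace (EuclideanSpace ℝ (Fin m)) M]
    [IsManifold (𝓡 m) (⊤ : ℕ∞) M] [CompactSpace M]
    (ι : M → EuclideanSpace ℝ (Fin (m + k)))
    (hι_smooth : ContMDiff (𝓡 m) 𝓘(ℝ, EuclideanSpace ℝ (Fin (m + k))) (⊤ : ℕ∞) ι)
    (hι_inj : Injective ι)
    (hι_imm : ∀ p : M,
      Injective (mfderiv (𝓡 m) 𝓘(ℝ, EuclideanSpace ℝ (Fin (m + k))) ι p))
    (hι_emb : Topology.IsEmbedding ι) :
    ∃ π : EuclideanSpace ℝ (Fin (m + k)) →ₗ[ℝ] EuclideanSpace ℝ (Fin (m + k)),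
      π ∘ₗ π = π ∧
      Module.finrank ℝ (LinearMap.range π) = 2 * m + 1 ∧
      ContMDiff (𝓡 m) 𝓘(ℝ, EuclideanSpace ℝ (Fin (m + k))) (⊤ : ℕ∞) (π ∘ ι) ∧
      Injective (π ∘ ι) ∧
      (∀ p : M,
        Injective (mfderiv (𝓡 m) 𝓘(ℝ, EuclideanSpace ℝ (Fin (m + k))) (π ∘ ι) p)) ∧
      Topology.IsEmbedding (π ∘ ι) :=
  whitney_projection_embedding_general m k hk M ι hι_smooth hι_inj hι_imm
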